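/- arXiv:2408.15184 — 3 statements merged into one kernel-verified Lean document; each statement's English description precedes it below -/
import Mathlib

section
/- Let F : Grph ⥤ Grph be a functor and α : 𝟭_Grph ⟶ F a natural transformation all of whose components are epimorphisms. If F sends the graph with one vertex and two loop edges to a graph isomorphic to the terminal graph (one vertex and one loop edge), then F does not preserve pushouts of spans of monomorphisms: there exists a span of monomorphisms in Grph whose pushout is not sent by F to a pushout. -/
open CategoryTheory CategoryTheory.Limits

/-- The category of directed multigraphs, realized as the functor category from the
walking parallel pair (objects `zero` = edges, `one` = vertices; morphisms
`left` = source, `right` = target) to `Type`. -/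
abbrev Grph : Type 1 := WalkingParallelPair ⥤ Type

namespace Grph

/-- The source map of a graph. -/
def src (G : Grph) : G.obj .zero → G.obj .one := G.map .left

/-- The target map of a graph. -/
def tgt (G : Grph) : G.obj .zero → G.obj .one := G.map .right

/-- The connectivity relation on the vertices of a graph: the equivalence relation
generated by relating `u` and `v` whenever some edge has source `u` and target `v`. -/
def connRel (G : Grph) : G.obj .one → G.obj .one → Prop :=
  Relation.EqvGen fun u v => ∃ e, G.src e = u ∧ G.tgt e = v

lemma connRel_map {G H : Grph} (φ : G ⟶ H) {u v : G.obj .one} (h : G.connRel u v) :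
    H.connRel (φ.app .one u) (φ.app .one v) := by
  induction h with
  | rel u v h =>
      obtain ⟨e, he, he'⟩ := h
      refine Relation.EqvGen.rel _ _ ⟨φ.app .zero e, ?_, ?_⟩
      · rw [← he]; exact (ConcreteCategory.congr_hom (φ.naturality WalkingParallelPairHom.left) e).symm
      · rw [← he']; exact (ConcreteCategory.congr_hom (φ.naturality WalkingParallelPairHom.right) e).symm
  | refl u => exact Relation.EqvGen.refl _
  | symm u v _ ih => exact Relation.EqvGen.symm _ _ ih
  | trans u v w _ _ ih₁ ih₂ => exact Relation.EqvGen.trans _ _ _ ih₁ ih₂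

/-- The graph obtained from `G` by quotienting its vertex set by the connectivity
relation; its edge set is that of `G`. -/
def ccObj (G : Grph) : Grph :=
  parallelPair (TypeCat.ofHom fun e => Quot.mk G.connRel (G.src e))
    (TypeCat.ofHom fun e => Quot.mk G.connRel (G.tgt e))

/-- The action of the connected components construction on graph homomorphisms. -/
def ccMap {G H : Grph} (φ : G ⟶ H) : ccObj G ⟶ ccObj H :=
  parallelPairHom _ _ _ _ (φ.app .zero)
    (TypeCat.ofHom (Quot.map (φ.app .one) (fun _ _ h => connRel_map φ h)))
    (by
      ext e
      exact congrArg (Quot.mk H.connRel)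
        (ConcreteCategory.congr_hom (φ.naturality WalkingParallelPairHom.left) e))
    (by
      ext e
      exact congrArg (Quot.mk H.connRel)
        (ConcreteCategory.congr_hom (φ.naturality WalkingParallelPairHom.right) e))

/-- The connected components functor `cc : Grph ⥤ Grph`. -/
def cc : Grph ⥤ Grph where
  obj := ccObj
  map := ccMap
  map_id G := by
    apply NatTrans.ext
    funext x
    cases x
    · rfl
    · ext q
      induction q using Quot.ind
      rfl
  map_comp φ ψ := by
    apply NatTrans.ext
    funext x
    cases x
    · rfl
    · ext q
      induction q using Quot.ind
      rfl

/-- The quotient homomorphism `π_G : G ⟶ cc(G)` (identity on edges). -/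
def ccπ (G : Grph) : G ⟶ cc.obj G where
  app x := match x with
    | .zero => TypeCat.ofHom fun e => e
    | .one => TypeCat.ofHom fun v => Quot.mk G.connRel v
  naturality := by
    intro X Y f
    change WalkingParallelPairHom X Y at f
    cases f with
    | id =>
        show G.map (𝟙 _) ≫ _ = _ ≫ (cc.obj G).map (𝟙 _)
        rw [CategoryTheory.Functor.map_id, CategoryTheory.Functor.map_id,
          Category.id_comp, Category.comp_id]
    | left => rfl
    | right => rfl

/-- The graph with one vertex and two loop edges. -/
def twoLoops : Grph := parallelPair (TypeCat.ofHom fun _ : Bool => PUnit.unit)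
  (TypeCat.ofHom fun _ : Bool => PUnit.unit)

/-- The terminal graph: one vertex with a single loop edge. -/
def oneLoop : Grph := parallelPair (TypeCat.ofHom fun _ : PUnit => PUnit.unit)
  (TypeCat.ofHom fun _ : PUnit => PUnit.unit)

end Grph

/-- A lasso on a category `C`: an endofunctor preserving pushouts of spans of
monomorphisms, together with a natural transformation from the identity functor all of
whose components are epimorphisms. -/
structure Lasso (C : Type u) [Category.{v} C] where
  /-- The underlying endofunctor. -/
  L : C ⥤ C
  /-- The natural transformation from the identity functor. -/
  η : 𝟭 C ⟶ L
  /-- `L` preserves pushouts of spans of monomorphisms. -/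
  preserves_monic_pushouts :
    ∀ ⦃A B D P : C⦄ (f : A ⟶ B) (g : A ⟶ D) (h : B ⟶ P) (k : D ⟶ P),
      Mono f → Mono g → IsPushout f g h k →
      IsPushout (L.map f) (L.map g) (L.map h) (L.map k)
  /-- Every component of `η` is an epimorphism. -/
  epi_components : ∀ X : C, Epi (η.app X)

open Grph

namespace Stmt3Aux

open Grph

/-- the graph with one vertex, no edges -/
def pt : Grph := parallelPair (TypeCat.ofHom fun e : Empty => PUnit.unit) (TypeCat.ofHom fun e : Empty => PUnit.unit)

def ι : pt ⟶ oneLoop :=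
  parallelPairHom _ _ _ _ (TypeCat.ofHom fun e : Empty => (e.elim : PUnit)) (TypeCat.ofHom id) (by ext e) (by ext e)

def j (b : Bool) : oneLoop ⟶ twoLoops :=
  parallelPairHom _ _ _ _ (TypeCat.ofHom fun _ => b) (TypeCat.ofHom id) rfl rfl

lemma comm : ι ≫ j true = ι ≫ j false := by
  apply NatTrans.ext
  funext x
  cases x
  · ext a; exact a.elim
  · rfl

instance monoι : Mono ι := by
  rw [NatTrans.mono_iff_mono_app]
  intro k
  cases k
  · rw [CategoryTheory.mono_iff_injective]
    intro a b _; exact a.elim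
  · rw [CategoryTheory.mono_iff_injective]
    exact fun a b h => h

def descFn (s : PushoutCocone ι ι) : twoLoops ⟶ s.pt where
  app x := match x with
    | .zero => TypeCat.ofHom fun b => cond b (s.inl.app .zero PUnit.unit) (s.inr.app .zero PUnit.unit)
    | .one => TypeCat.ofHom fun _ => s.inl.app .one PUnit.unit
  naturality := by
    have hv : s.inl.app .one = s.inr.app .one := by
      have := congrArg (fun (φ : pt ⟶ s.pt) => φ.app WalkingParallelPair.one) s.condition
      ext u; cases u
      exact ConcreteCategory.congr_hom this PUnit.unit
    intro X Y f
    change WalkingParallelPairHom X Y at f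
    cases f with
    | id =>
        show twoLoops.map (𝟙 _) ≫ _ = _ ≫ s.pt.map (𝟙 _)
        rw [CategoryTheory.Functor.map_id, CategoryTheory.Functor.map_id,
          Category.id_comp, Category.comp_id]
    | left =>
        ext b
        cases b
        · show s.inl.app .one PUnit.unit = s.pt.map .left (s.inr.app .zero PUnit.unit)
          rw [hv]
          exact ConcreteCategory.congr_hom (s.inr.naturality WalkingParallelPairHom.left) PUnit.unit
        · show s.inl.app .one PUnit.unit = s.pt.map .left (s.inl.app .zero PUnit.unit)
          exact ConcreteCategory.congr_hom (s.inl.naturality WalkingParallelPairHom.left) PUnit.unit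
    | right =>
        ext b
        cases b
        · show s.inl.app .one PUnit.unit = s.pt.map .right (s.inr.app .zero PUnit.unit)
          rw [hv]
          exact ConcreteCategory.congr_hom (s.inr.naturality WalkingParallelPairHom.right) PUnit.unit
        · show s.inl.app .one PUnit.unit = s.pt.map .right (s.inl.app .zero PUnit.unit)
          exact ConcreteCategory.congr_hom (s.inl.naturality WalkingParallelPairHom.right) PUnit.unit

def isColim : IsColimit (PushoutCocone.mk (j true) (j false) comm) := by
  refine PushoutCocone.IsColimit.mk _ descFn ?_ ?_ ?_
  · intro s
    apply NatTrans.ext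
    funext x
    cases x
    · ext u; cases u; rfl
    · ext u; cases u; rfl
  · intro s
    have hv : s.inl.app .one = s.inr.app .one := by
      have := congrArg (fun (φ : pt ⟶ s.pt) => φ.app WalkingParallelPair.one) s.condition
      ext u; cases u
      exact ConcreteCategory.congr_hom this PUnit.unit
    apply NatTrans.ext
    funext x
    cases x
    · ext u; cases u; rfl
    · ext u; cases u
      exact ConcreteCategory.congr_hom hv PUnit.unit
  · intro s m h1 h2
    apply NatTrans.ext
    funext x
    cases x
    · ext b
      cases b
      · exact ConcreteCategory.congr_hom (congrArg (fun (φ : oneLoop ⟶ s.pt) => φ.app WalkingParallelPair.zero) h2) PUnit.unit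
      · exact ConcreteCategory.congr_hom (congrArg (fun (φ : oneLoop ⟶ s.pt) => φ.app WalkingParallelPair.zero) h1) PUnit.unit
    · ext u; cases u
      exact ConcreteCategory.congr_hom (congrArg (fun (φ : oneLoop ⟶ s.pt) => φ.app WalkingParallelPair.one) h1) PUnit.unit

lemma ispo : IsPushout ι ι (j true) (j false) := IsPushout.of_isColimit isColim

end Stmt3Aux

open Stmt3Aux

theorem stmt3 (F : Grph ⥤ Grph) (α : 𝟭 Grph ⟶ F) (hepi : ∀ G : Grph, Epi (α.app G))
    (h : Nonempty (F.obj twoLoops ≅ oneLoop)) :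
    ¬ (∀ ⦃A B D P : Grph⦄ (f : A ⟶ B) (g : A ⟶ D) (h' : B ⟶ P) (k : D ⟶ P),
        Mono f → Mono g → IsPushout f g h' k →
        IsPushout (F.map f) (F.map g) (F.map h') (F.map k)) := by
  intro hpres
  obtain ⟨e⟩ := h
  have hpo := hpres ι ι (j true) (j false) monoι monoι ispo
  have hpo0 : IsPushout ((F.map ι).app .zero) ((F.map ι).app .zero)
      ((F.map (j true)).app .zero) ((F.map (j false)).app .zero) :=
    Functor.map_isPushout ((evaluation WalkingParallelPair Type).obj .zero) hpo
  -- F(pt) has empty edge set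
  have hptepi : Epi ((α.app pt).app WalkingParallelPair.zero) := by
    have := hepi pt
    rw [NatTrans.epi_iff_epi_app] at this
    exact this _
  rw [CategoryTheory.epi_iff_surjective] at hptepi
  -- cocone
  have hcond : (F.map ι).app .zero ≫ (TypeCat.ofHom (fun _ => true : (F.obj oneLoop).obj .zero → Bool))
      = (F.map ι).app .zero ≫ (TypeCat.ofHom fun _ => false) := by
    ext x
    obtain ⟨a, -⟩ := hptepi x
    exact a.elim
  set d := hpo0.desc (TypeCat.ofHom fun _ => true) (TypeCat.ofHom fun _ => false) hcond with hd
  have hd1 := hpo0.inl_desc (TypeCat.ofHom fun _ => true) (TypeCat.ofHom fun _ => false) hcond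
  have hd2 := hpo0.inr_desc (TypeCat.ofHom fun _ => true) (TypeCat.ofHom fun _ => false) hcond
  set p := (α.app oneLoop).app WalkingParallelPair.zero PUnit.unit with hp
  have hx : d ((F.map (j true)).app .zero p) = true := ConcreteCategory.congr_hom hd1 p
  have hy : d ((F.map (j false)).app .zero p) = false := ConcreteCategory.congr_hom hd2 p
  have hinj : Function.Injective (e.hom.app WalkingParallelPair.zero) := by
    intro a b hab
    have h1 := ConcreteCategory.congr_hom (e.hom_inv_id_app WalkingParallelPair.zero) a
    have h2 := ConcreteCategory.congr_hom (e.hom_inv_id_app WalkingParallelPair.zero) b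
    calc a = e.inv.app _ (e.hom.app _ a) := h1.symm
    _ = e.inv.app _ (e.hom.app _ b) := by rw [hab]
    _ = b := h2
  have heq : (F.map (j true)).app WalkingParallelPair.zero p
      = (F.map (j false)).app WalkingParallelPair.zero p := by
    apply hinj
    exact Subsingleton.elim (α := PUnit) _ _
  rw [heq, hy] at hx
  exact Bool.false_ne_true hx
end

section
/- Every lasso on Grph is edge-trivial: for every lasso (L, η) on Grph and every graph G, the edge map of the component η_G : G ⟶ L(G) is a bijection. -/
open CategoryTheory CategoryTheory.Limits

open Grph

namespace LassoAux

/-- The graph with one vertex and no edges. -/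
def pt : Grph := parallelPair (TypeCat.ofHom fun x : Empty => (Empty.elim x : PUnit)) (TypeCat.ofHom fun x : Empty => (Empty.elim x : PUnit))

/-- The inclusion of the single vertex into `oneLoop`. -/
def j : pt ⟶ oneLoop :=
  parallelPairHom _ _ _ _ (TypeCat.ofHom fun x : Empty => (Empty.elim x : PUnit)) (TypeCat.ofHom fun _ : PUnit => (PUnit.unit : PUnit))
    (by ext x) (by ext x)

/-- The inclusion of `oneLoop` into `twoLoops` hitting the `true` loop. -/
def h1 : oneLoop ⟶ twoLoops :=
  parallelPairHom _ _ _ _ (TypeCat.ofHom fun _ : PUnit => true) (TypeCat.ofHom fun _ : PUnit => (PUnit.unit : PUnit)) rfl rfl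

/-- The inclusion of `oneLoop` into `twoLoops` hitting the `false` loop. -/
def h2 : oneLoop ⟶ twoLoops :=
  parallelPairHom _ _ _ _ (TypeCat.ofHom fun _ : PUnit => false) (TypeCat.ofHom fun _ : PUnit => (PUnit.unit : PUnit)) rfl rfl

lemma comm : j ≫ h1 = j ≫ h2 := by
  apply NatTrans.ext
  funext x
  cases x
  · ext e; exact Empty.elim e
  · rfl

instance mono_j : Mono j := by
  have : ∀ x, Mono (j.app x) := by
    intro x
    cases x
    · rw [CategoryTheory.mono_iff_injective]
      intro a; exact Empty.elim a
    · rw [CategoryTheory.mono_iff_injective]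
      intro a b _; rfl
  exact NatTrans.mono_of_mono_app j

/-- `twoLoops` is the pushout of two copies of `oneLoop` along the single vertex. -/
lemma isPushout : IsPushout j j h1 h2 := by
  apply IsPushout.of_isColimit'  ⟨comm⟩
  apply Limits.PushoutCocone.IsColimit.mk
  case desc =>
    intro s
    have hv : s.inl.app .one PUnit.unit = s.inr.app .one PUnit.unit := by
      have := NatTrans.congr_app s.condition WalkingParallelPair.one
      exact ConcreteCategory.congr_hom this PUnit.unit
    exact
      { app := fun x => match x with
          | .zero => TypeCat.ofHom fun b => bif b then s.inl.app .zero PUnit.unit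
              else s.inr.app .zero PUnit.unit
          | .one => TypeCat.ofHom fun _ => s.inl.app .one PUnit.unit
        naturality := by
          intro X Y f
          change WalkingParallelPairHom X Y at f
          cases f with
          | id =>
              show twoLoops.map (𝟙 _) ≫ _ = _ ≫ s.pt.map (𝟙 _)
              rw [CategoryTheory.Functor.map_id, CategoryTheory.Functor.map_id,
                Category.id_comp, Category.comp_id]
          | left =>
              ext b
              cases b
              · show s.inl.app .one PUnit.unit = s.pt.map .left (s.inr.app .zero PUnit.unit)
                rw [hv]
                exact (ConcreteCategory.congr_hom (s.inr.naturality WalkingParallelPairHom.left)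
                  PUnit.unit)
              · exact (ConcreteCategory.congr_hom (s.inl.naturality WalkingParallelPairHom.left)
                  PUnit.unit)
          | right =>
              ext b
              cases b
              · show s.inl.app .one PUnit.unit = s.pt.map .right (s.inr.app .zero PUnit.unit)
                rw [hv]
                exact (ConcreteCategory.congr_hom (s.inr.naturality WalkingParallelPairHom.right)
                  PUnit.unit)
              · exact (ConcreteCategory.congr_hom (s.inl.naturality WalkingParallelPairHom.right)
                  PUnit.unit) }
  case fac_left =>
    intro s
    apply NatTrans.ext
    funext x
    cases x
    · ext e; cases e; rfl
    · ext v; cases v; rfl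
  case fac_right =>
    intro s
    have hv : s.inl.app .one PUnit.unit = s.inr.app .one PUnit.unit := by
      have := NatTrans.congr_app s.condition WalkingParallelPair.one
      exact ConcreteCategory.congr_hom this PUnit.unit
    apply NatTrans.ext
    funext x
    cases x
    · ext e; cases e; rfl
    · ext v; cases v; exact hv
  case uniq =>
    intro s m hl hr
    apply NatTrans.ext
    funext x
    cases x
    · ext b
      cases b
      · exact ConcreteCategory.congr_hom (congr_fun (congrArg NatTrans.app hr) WalkingParallelPair.zero)
          PUnit.unit
      · exact ConcreteCategory.congr_hom (congr_fun (congrArg NatTrans.app hl) WalkingParallelPair.zero)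
          PUnit.unit
    · ext v
      cases v
      exact ConcreteCategory.congr_hom (congr_fun (congrArg NatTrans.app hl) WalkingParallelPair.one)
        PUnit.unit

/-- `L(pt)` has no edges, since `η` is pointwise epi and `pt` has none. -/
lemma isEmpty_edges (l : Lasso Grph) : IsEmpty ((l.L.obj pt).obj .zero) := by
  have := l.epi_components pt
  have hepi : Epi ((l.η.app pt).app WalkingParallelPair.zero) := inferInstance
  rw [CategoryTheory.epi_iff_surjective] at hepi
  constructor
  intro y
  obtain ⟨x, -⟩ := hepi y
  exact Empty.elim x

/-- The key separation fact: no lasso can identify the two loops of `twoLoops`. -/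
lemma sep (l : Lasso Grph) :
    (l.η.app twoLoops).app .zero true ≠ (l.η.app twoLoops).app .zero false := by
  have hP : IsPushout (l.L.map j) (l.L.map j) (l.L.map h1) (l.L.map h2) :=
    l.preserves_monic_pushouts j j h1 h2 mono_j mono_j isPushout
  have hT := hP.map ((evaluation WalkingParallelPair Type).obj WalkingParallelPair.zero)
  haveI := isEmpty_edges l
  have hcomm :
      ((evaluation WalkingParallelPair Type).obj WalkingParallelPair.zero).map (l.L.map j) ≫
        (TypeCat.ofHom fun _ => true : (l.L.obj oneLoop).obj .zero ⟶ Bool) =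
      ((evaluation WalkingParallelPair Type).obj WalkingParallelPair.zero).map (l.L.map j) ≫
        (TypeCat.ofHom fun _ => false : (l.L.obj oneLoop).obj .zero ⟶ Bool) := by
    ext a
    exact ((isEmpty_edges l).false a).elim
  set sep' : (l.L.obj twoLoops).obj .zero ⟶ Bool :=
    hT.desc (TypeCat.ofHom fun _ => true) (TypeCat.ofHom fun _ => false) hcomm with hsep
  have h1' : ∀ x, sep' ((l.L.map h1).app .zero x) = true := by
    intro x
    exact ConcreteCategory.congr_hom (hT.inl_desc (TypeCat.ofHom fun _ => true) (TypeCat.ofHom fun _ => false) hcomm) x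
  have h2' : ∀ x, sep' ((l.L.map h2).app .zero x) = false := by
    intro x
    exact ConcreteCategory.congr_hom (hT.inr_desc (TypeCat.ofHom fun _ => true) (TypeCat.ofHom fun _ => false) hcomm) x
  intro hcol
  set x0 : (l.L.obj oneLoop).obj .zero := (l.η.app oneLoop).app .zero PUnit.unit with hx0
  have e1 : (l.η.app twoLoops).app .zero true = (l.L.map h1).app .zero x0 := by
    have := NatTrans.congr_app (l.η.naturality h1) WalkingParallelPair.zero
    exact ConcreteCategory.congr_hom this PUnit.unit
  have e2 : (l.η.app twoLoops).app .zero false = (l.L.map h2).app .zero x0 := by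
    have := NatTrans.congr_app (l.η.naturality h2) WalkingParallelPair.zero
    exact ConcreteCategory.congr_hom this PUnit.unit
  have : (true : Bool) = false := by
    rw [← h1' x0, ← h2' x0, ← e1, ← e2, hcol]
  exact Bool.noConfusion this

end LassoAux

theorem stmt4 (l : Lasso Grph) (G : Grph) :
    Function.Bijective ((l.η.app G).app .zero) := by
  classical
  constructor
  · -- injectivity
    intro e1 e2 heq
    by_contra hne
    -- classifying map `G ⟶ twoLoops` separating `e1` from all other edges
    let φ : G ⟶ twoLoops :=
      { app := fun x => match x with
          | .zero => TypeCat.ofHom fun e => if e = e1 then true else false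
          | .one => TypeCat.ofHom fun _ => PUnit.unit
        naturality := by
          intro X Y f
          change WalkingParallelPairHom X Y at f
          cases f with
          | id =>
              show G.map (𝟙 _) ≫ _ = _ ≫ twoLoops.map (𝟙 _)
              rw [CategoryTheory.Functor.map_id, CategoryTheory.Functor.map_id,
                Category.id_comp, Category.comp_id]
          | left => rfl
          | right => rfl }
    have nat1 : (l.η.app twoLoops).app .zero (φ.app .zero e1) =
        (l.L.map φ).app .zero ((l.η.app G).app .zero e1) := by
      have := NatTrans.congr_app (l.η.naturality φ) WalkingParallelPair.zero
      exact ConcreteCategory.congr_hom this e1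
    have nat2 : (l.η.app twoLoops).app .zero (φ.app .zero e2) =
        (l.L.map φ).app .zero ((l.η.app G).app .zero e2) := by
      have := NatTrans.congr_app (l.η.naturality φ) WalkingParallelPair.zero
      exact ConcreteCategory.congr_hom this e2
    have hφ1 : φ.app .zero e1 = true := if_pos rfl
    have hφ2 : φ.app .zero e2 = false := if_neg (fun h => hne h.symm)
    apply LassoAux.sep l
    rw [← hφ1, ← hφ2, nat1, nat2, heq]
  · -- surjectivity
    have := l.epi_components G
    have hepi : Epi ((l.η.app G).app WalkingParallelPair.zero) := inferInstance
    exact (CategoryTheory.epi_iff_surjective _).1 hepi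
end

section
/- The smoothing functor smooth : RGrph ⥤ RGrph does not preserve pushouts of spans of monomorphisms: there exists a span of monomorphisms in RGrph whose pushout is not sent by smooth to a pushout. -/
open CategoryTheory CategoryTheory.Limits

/-- The objects of the schema category for reflexive graphs: edges `E` and vertices `V`. -/
inductive SRGrObj : Type
  | E | V
  deriving DecidableEq

/-- The morphisms of the schema category for reflexive graphs: besides the identities,
the source and target maps `s t : E ⟶ V`, the distinguished-loop map `l : V ⟶ E`, and
the two composites `ls = s ≫ l` and `lt = t ≫ l` (subject to `l ≫ s = 𝟙 V` and
`l ≫ t = 𝟙 V`). -/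
inductive SRGrHom : SRGrObj → SRGrObj → Type
  | ide (X : SRGrObj) : SRGrHom X X
  | s : SRGrHom .E .V
  | t : SRGrHom .E .V
  | l : SRGrHom .V .E
  | ls : SRGrHom .E .E
  | lt : SRGrHom .E .E

namespace SRGrHom

/-- Composition in the schema category for reflexive graphs. -/
def comp : {X Y Z : SRGrObj} → SRGrHom X Y → SRGrHom Y Z → SRGrHom X Z
  | _, _, _, .ide _, g => g
  | _, _, _, .s, .ide _ => .s
  | _, _, _, .s, .l => .ls
  | _, _, _, .t, .ide _ => .t
  | _, _, _, .t, .l => .lt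
  | _, _, _, .l, .ide _ => .l
  | _, _, _, .l, .s => .ide _
  | _, _, _, .l, .t => .ide _
  | _, _, _, .l, .ls => .l
  | _, _, _, .l, .lt => .l
  | _, _, _, .ls, .ide _ => .ls
  | _, _, _, .ls, .s => .s
  | _, _, _, .ls, .t => .s
  | _, _, _, .ls, .ls => .ls
  | _, _, _, .ls, .lt => .ls
  | _, _, _, .lt, .ide _ => .lt
  | _, _, _, .lt, .s => .t
  | _, _, _, .lt, .t => .t
  | _, _, _, .lt, .ls => .lt
  | _, _, _, .lt, .lt => .lt

end SRGrHom

/-- The schema category for reflexive graphs. -/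
instance : Category SRGrObj where
  Hom := SRGrHom
  id := SRGrHom.ide
  comp := SRGrHom.comp
  id_comp f := rfl
  comp_id f := by cases f <;> rfl
  assoc f g h := by cases f <;> cases g <;> cases h <;> rfl

@[simp] lemma SRGrHom.comp_def {X Y Z : SRGrObj} (f : X ⟶ Y) (g : Y ⟶ Z) :
    f ≫ g = SRGrHom.comp f g := rfl

@[simp] lemma SRGrHom.id_def (X : SRGrObj) : 𝟙 X = SRGrHom.ide X := rfl

/-- The category of reflexive graphs, realized as the functor category from the schema
category `SRGrObj` to `Type`. -/
abbrev RGrph : Type 1 := SRGrObj ⥤ Type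

/-- Build a reflexive graph from the data of a vertex set, an edge set, source and target
maps and a distinguished-loop map satisfying the reflexivity equations. -/
def mkRGrph (Vt Et : Type) (s t : Et → Vt) (l : Vt → Et)
    (hs : ∀ v, s (l v) = v) (ht : ∀ v, t (l v) = v) : RGrph where
  obj X := match X with
    | .E => Et
    | .V => Vt
  map {X Y} f := match X, Y, f with
    | _, _, .ide _ => TypeCat.ofHom id
    | _, _, .s => TypeCat.ofHom s
    | _, _, .t => TypeCat.ofHom t
    | _, _, .l => TypeCat.ofHom l
    | _, _, .ls => TypeCat.ofHom fun e => l (s e)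
    | _, _, .lt => TypeCat.ofHom fun e => l (t e)
  map_id X := rfl
  map_comp {X Y Z} f g := by
    cases f using SRGrHom.casesOn <;> cases g using SRGrHom.casesOn <;> ext x <;>
      simp [SRGrHom.comp_def, SRGrHom.comp, hs, ht, types_comp_apply]

namespace RGrph

@[simp] lemma map_l_s (G : RGrph) (v : G.obj .V) :
    G.map SRGrHom.s (G.map SRGrHom.l v) = v := by
  have h : G.map (SRGrHom.l ≫ SRGrHom.s) = G.map SRGrHom.l ≫ G.map SRGrHom.s :=
    G.map_comp _ _
  have h' : G.map (SRGrHom.l ≫ SRGrHom.s) = 𝟙 _ := G.map_id SRGrObj.V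
  have := types_congr_hom (h.symm.trans h') v
  simpa [types_comp_apply] using this

@[simp] lemma map_l_t (G : RGrph) (v : G.obj .V) :
    G.map SRGrHom.t (G.map SRGrHom.l v) = v := by
  have h : G.map (SRGrHom.l ≫ SRGrHom.t) = G.map SRGrHom.l ≫ G.map SRGrHom.t :=
    G.map_comp _ _
  have h' : G.map (SRGrHom.l ≫ SRGrHom.t) = 𝟙 _ := G.map_id SRGrObj.V
  have := types_congr_hom (h.symm.trans h') v
  simpa [types_comp_apply] using this

@[simp] lemma map_ls (G : RGrph) (e : G.obj .E) :
    G.map SRGrHom.ls e = G.map SRGrHom.l (G.map SRGrHom.s e) := by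
  have h : G.map (SRGrHom.s ≫ SRGrHom.l) = G.map SRGrHom.s ≫ G.map SRGrHom.l :=
    G.map_comp _ _
  exact types_congr_hom h e

@[simp] lemma map_lt (G : RGrph) (e : G.obj .E) :
    G.map SRGrHom.lt e = G.map SRGrHom.l (G.map SRGrHom.t e) := by
  have h : G.map (SRGrHom.t ≫ SRGrHom.l) = G.map SRGrHom.t ≫ G.map SRGrHom.l :=
    G.map_comp _ _
  exact types_congr_hom h e

@[simp] lemma map_ide (G : RGrph) (X : SRGrObj) (x : G.obj X) :
    G.map (SRGrHom.ide X) x = x := by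
  have h : G.map (𝟙 X) = 𝟙 _ := G.map_id X
  simpa using types_congr_hom h x

/-- Build a morphism of reflexive graphs from an arbitrary reflexive graph `G` to one
built by `mkRGrph`, from compatible vertex and edge maps. -/
def homToMk (G : RGrph) {Vt Et : Type} {s t : Et → Vt} {l : Vt → Et}
    {hs : ∀ v, s (l v) = v} {ht : ∀ v, t (l v) = v}
    (fv : G.obj .V → Vt) (fe : G.obj .E → Et)
    (hfs : ∀ e, s (fe e) = fv (G.map SRGrHom.s e))
    (hft : ∀ e, t (fe e) = fv (G.map SRGrHom.t e))
    (hfl : ∀ v, l (fv v) = fe (G.map SRGrHom.l v)) :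
    G ⟶ mkRGrph Vt Et s t l hs ht where
  app X := match X with
    | .E => TypeCat.ofHom fe
    | .V => TypeCat.ofHom fv
  naturality := by
    intro X Y f
    cases f using SRGrHom.casesOn <;> ext x <;>
      simp [mkRGrph, types_comp_apply, hfs, hft, hfl, CategoryTheory.Functor.map_id]

end RGrph

namespace RGrph

/-- The relation on edges identifying any two loops with the same endvertex. -/
def loopRel (G : RGrph) : G.obj .E → G.obj .E → Prop := fun e e' =>
  e = e' ∨ (G.map SRGrHom.s e = G.map SRGrHom.t e ∧
    G.map SRGrHom.s e' = G.map SRGrHom.t e' ∧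
    G.map SRGrHom.s e = G.map SRGrHom.s e')

lemma loopRel_src {G : RGrph} {e e' : G.obj .E} (h : loopRel G e e') :
    G.map SRGrHom.s e = G.map SRGrHom.s e' := by
  rcases h with rfl | ⟨_, _, h₃⟩
  · rfl
  · exact h₃

lemma loopRel_tgt {G : RGrph} {e e' : G.obj .E} (h : loopRel G e e') :
    G.map SRGrHom.t e = G.map SRGrHom.t e' := by
  rcases h with rfl | ⟨h₁, h₂, h₃⟩
  · rfl
  · rw [← h₁, ← h₂, h₃]

/-- The delooping of a reflexive graph: the same vertex set, with edge set the quotient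
of the edges by the identification of loops sharing an endvertex. -/
def deloopObj (G : RGrph) : RGrph :=
  mkRGrph (G.obj .V) (Quot (loopRel G))
    (Quot.lift (G.map SRGrHom.s) fun _ _ h => loopRel_src h)
    (Quot.lift (G.map SRGrHom.t) fun _ _ h => loopRel_tgt h)
    (fun v => Quot.mk _ (G.map SRGrHom.l v))
    (fun v => by simp)
    (fun v => by simp)

/-- The quotient morphism `G ⟶ deloopObj G`. -/
def deloopπ (G : RGrph) : G ⟶ deloopObj G :=
  homToMk G id (Quot.mk _) (fun _ => rfl) (fun _ => rfl) (fun _ => rfl)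

lemma loopRel_of_map {G H : RGrph} (φ : G ⟶ H) {e e' : G.obj .E} (h : loopRel G e e') :
    loopRel H (φ.app .E e) (φ.app .E e') := by
  have hs : ∀ x, H.map SRGrHom.s (φ.app .E x) = φ.app .V (G.map SRGrHom.s x) :=
    fun x => (types_congr_hom (φ.naturality SRGrHom.s) x).symm
  have ht : ∀ x, H.map SRGrHom.t (φ.app .E x) = φ.app .V (G.map SRGrHom.t x) :=
    fun x => (types_congr_hom (φ.naturality SRGrHom.t) x).symm
  rcases h with rfl | ⟨h₁, h₂, h₃⟩
  · exact Or.inl rfl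
  · exact Or.inr ⟨by rw [hs, ht, h₁], by rw [hs, ht, h₂], by rw [hs, hs, h₃]⟩

/-- The action of delooping on morphisms of reflexive graphs. -/
def deloopMap {G H : RGrph} (φ : G ⟶ H) : deloopObj G ⟶ deloopObj H :=
  homToMk (deloopObj G) (⇑(φ.app .V))
    (Quot.map (⇑(φ.app .E)) fun _ _ h => loopRel_of_map φ h)
    (fun e => by
      induction e using Quot.ind
      exact (types_congr_hom (φ.naturality SRGrHom.s) _).symm)
    (fun e => by
      induction e using Quot.ind
      exact (types_congr_hom (φ.naturality SRGrHom.t) _).symm)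
    (fun v => by
      have h := types_congr_hom (φ.naturality SRGrHom.l) v
      simp only [types_comp_apply, Functor.id_map] at h
      exact congrArg (Quot.mk _) h.symm)

/-- The delooping functor on reflexive graphs. -/
def deloop : RGrph ⥤ RGrph where
  obj := deloopObj
  map := deloopMap
  map_id G := by
    apply NatTrans.ext
    funext X
    cases X
    · ext e
      induction e using Quot.ind
      rfl
    · rfl
  map_comp φ ψ := by
    apply NatTrans.ext
    funext X
    cases X
    · ext e
      induction e using Quot.ind
      rfl
    · rfl

/-- The componentwise quotient natural transformation `δ : 𝟭 RGrph ⟶ deloop`. -/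
def deloopUnit : 𝟭 RGrph ⟶ deloop where
  app := deloopπ
  naturality := by
    intro G H φ
    apply NatTrans.ext
    funext X
    cases X <;> rfl

end RGrph

namespace RGrph

/-- The relation identifying parallel edges (same source and same target). -/
def parRel (G : RGrph) : G.obj .E → G.obj .E → Prop := fun e e' =>
  G.map SRGrHom.s e = G.map SRGrHom.s e' ∧ G.map SRGrHom.t e = G.map SRGrHom.t e'

lemma parRel_of_map {G H : RGrph} (φ : G ⟶ H) {e e' : G.obj .E} (h : parRel G e e') :
    parRel H (φ.app .E e) (φ.app .E e') := by
  have hs : ∀ x, H.map SRGrHom.s (φ.app .E x) = φ.app .V (G.map SRGrHom.s x) :=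
    fun x => (types_congr_hom (φ.naturality SRGrHom.s) x).symm
  have ht : ∀ x, H.map SRGrHom.t (φ.app .E x) = φ.app .V (G.map SRGrHom.t x) :=
    fun x => (types_congr_hom (φ.naturality SRGrHom.t) x).symm
  exact ⟨by rw [hs, hs, h.1], by rw [ht, ht, h.2]⟩

/-- The smoothing of a reflexive graph: the same vertex set, with edge set the quotient
of the edges by the identification of parallel edges. -/
def smoothObj (G : RGrph) : RGrph :=
  mkRGrph (G.obj .V) (Quot (parRel G))
    (Quot.lift (G.map SRGrHom.s) fun _ _ h => h.1)
    (Quot.lift (G.map SRGrHom.t) fun _ _ h => h.2)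
    (fun v => Quot.mk _ (G.map SRGrHom.l v))
    (fun v => by simp)
    (fun v => by simp)

/-- The action of smoothing on morphisms of reflexive graphs. -/
def smoothMap {G H : RGrph} (φ : G ⟶ H) : smoothObj G ⟶ smoothObj H :=
  homToMk (smoothObj G) (⇑(φ.app .V))
    (Quot.map (⇑(φ.app .E)) fun _ _ h => parRel_of_map φ h)
    (fun e => by
      induction e using Quot.ind
      exact (types_congr_hom (φ.naturality SRGrHom.s) _).symm)
    (fun e => by
      induction e using Quot.ind
      exact (types_congr_hom (φ.naturality SRGrHom.t) _).symm)
    (fun v => by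
      have h := types_congr_hom (φ.naturality SRGrHom.l) v
      simp only [types_comp_apply, Functor.id_map] at h
      exact congrArg (Quot.mk _) h.symm)

/-- The smoothing functor on reflexive graphs. -/
def smooth : RGrph ⥤ RGrph where
  obj := smoothObj
  map := smoothMap
  map_id G := by
    apply NatTrans.ext
    funext X
    cases X
    · ext e
      induction e using Quot.ind
      rfl
    · rfl
  map_comp φ ψ := by
    apply NatTrans.ext
    funext X
    cases X
    · ext e
      induction e using Quot.ind
      rfl
    · rfl

/-- The terminal reflexive graph: one vertex with its distinguished loop. -/
def terminalRGrph : RGrph :=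
  mkRGrph PUnit PUnit (fun _ => PUnit.unit) (fun _ => PUnit.unit) (fun _ => PUnit.unit)
    (fun v => by cases v; rfl) (fun v => by cases v; rfl)

/-- The reflexive graph with two vertices, their two distinguished loops, and exactly one
further edge between the two vertices. -/
def edgeRGrph : RGrph :=
  mkRGrph Bool (Option Bool)
    (fun e => e.getD false) (fun e => e.getD true) (fun v => some v)
    (fun v => rfl) (fun v => rfl)

/-- The morphism from the terminal reflexive graph picking out the vertex `false`. -/
def edgePtFalse : terminalRGrph ⟶ edgeRGrph :=
  homToMk terminalRGrph (fun _ => false) (fun _ => some false)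
    (fun _ => rfl) (fun _ => rfl) (fun _ => rfl)

/-- The morphism from the terminal reflexive graph picking out the vertex `true`. -/
def edgePtTrue : terminalRGrph ⟶ edgeRGrph :=
  homToMk terminalRGrph (fun _ => true) (fun _ => some true)
    (fun _ => rfl) (fun _ => rfl) (fun _ => rfl)

end RGrph

open RGrph

namespace Stmt17Aux

/-- Two-vertex discrete reflexive graph. -/
def Agr : RGrph := mkRGrph Bool Bool id id id (fun _ => rfl) (fun _ => rfl)

/-- Inclusion of the vertices into the edge graph. -/
def fAB : Agr ⟶ edgeRGrph :=
  homToMk Agr id some (fun _ => rfl) (fun _ => rfl) (fun _ => rfl)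

/-- Graph with two vertices and two parallel edges between them. -/
def Pgr : RGrph := mkRGrph Bool (Bool ⊕ Bool)
  (fun e => match e with | .inl v => v | .inr _ => false)
  (fun e => match e with | .inl v => v | .inr _ => true)
  (fun v => .inl v) (fun _ => rfl) (fun _ => rfl)

/-- First pushout injection. -/
def hBP : edgeRGrph ⟶ Pgr :=
  homToMk edgeRGrph id
    (fun e => match e with | some v => .inl v | none => .inr false)
    (fun e => by cases e <;> rfl) (fun e => by cases e <;> rfl) (fun _ => rfl)

/-- Second pushout injection. -/
def kBP : edgeRGrph ⟶ Pgr :=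
  homToMk edgeRGrph id
    (fun e => match e with | some v => .inl v | none => .inr true)
    (fun e => by cases e <;> rfl) (fun e => by cases e <;> rfl) (fun _ => rfl)

lemma monoF : Mono fAB := by
  constructor
  intro Z u v huv
  apply NatTrans.ext; funext X
  have h' : ∀ x, fAB.app X (u.app X x) = fAB.app X (v.app X x) := by
    intro x
    exact types_congr_hom (congr_fun (congrArg NatTrans.app huv) X) x
  ext x
  cases X
  · exact Option.some.inj (h' x)
  · exact h' x

lemma commSq : fAB ≫ hBP = fAB ≫ kBP := by
  apply NatTrans.ext; funext X
  cases X <;> rfl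

/-- Descent morphism out of `Pgr` for a cocone under the span. -/
def descHom {W : RGrph} (cb cd : edgeRGrph ⟶ W)
    (hcond : fAB ≫ cb = fAB ≫ cd) : Pgr ⟶ W where
  app X := match X with
    | .V => cb.app .V
    | .E => TypeCat.ofHom fun (e : Bool ⊕ Bool) => match e with
      | .inl v => cb.app .E (some v)
      | .inr false => cb.app .E none
      | .inr true => cd.app .E none
  naturality := by
    have hV : ∀ v, cb.app .V v = cd.app .V v := fun v =>
      types_congr_hom (congr_fun (congrArg NatTrans.app hcond) SRGrObj.V) v
    have hE : ∀ v, cb.app .E (some v) = cd.app .E (some v) := fun v =>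
      types_congr_hom (congr_fun (congrArg NatTrans.app hcond) SRGrObj.E) v
    intro X Y m
    have nb : ∀ {X Y : SRGrObj} (m : X ⟶ Y) x,
        W.map m (cb.app X x) = cb.app Y (edgeRGrph.map m x) := by
      intro X Y m x
      exact (types_congr_hom (cb.naturality m) x).symm
    have nd : ∀ {X Y : SRGrObj} (m : X ⟶ Y) x,
        W.map m (cd.app X x) = cd.app Y (edgeRGrph.map m x) := by
      intro X Y m x
      exact (types_congr_hom (cd.naturality m) x).symm
    cases m using SRGrHom.casesOn <;> ext e <;> symm
    · show W.map (SRGrHom.ide _) _ = _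
      rw [RGrph.map_ide]
      rfl
    · show W.map SRGrHom.s _ = _
      match e with
      | .inl v => exact nb SRGrHom.s (some v)
      | .inr false => exact nb SRGrHom.s none
      | .inr true => exact (nd SRGrHom.s none).trans (hV false).symm
    · show W.map SRGrHom.t _ = _
      match e with
      | .inl v => exact nb SRGrHom.t (some v)
      | .inr false => exact nb SRGrHom.t none
      | .inr true => exact (nd SRGrHom.t none).trans (hV true).symm
    · show W.map SRGrHom.l _ = _
      exact nb SRGrHom.l e
    · show W.map SRGrHom.ls _ = _
      match e with
      | .inl v => exact nb SRGrHom.ls (some v)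
      | .inr false => exact nb SRGrHom.ls none
      | .inr true => exact (nd SRGrHom.ls none).trans (hE false).symm
    · show W.map SRGrHom.lt _ = _
      match e with
      | .inl v => exact nb SRGrHom.lt (some v)
      | .inr false => exact nb SRGrHom.lt none
      | .inr true => exact (nd SRGrHom.lt none).trans (hE true).symm

/-- The square `fAB, fAB, hBP, kBP` is a pushout. -/
lemma isPushoutSquare : IsPushout fAB fAB hBP kBP := by
  apply IsPushout.of_isColimit (c := PushoutCocone.mk hBP kBP commSq)
  refine PushoutCocone.IsColimit.mk commSq
    (fun s => descHom s.inl s.inr s.condition) (fun s => ?_) (fun s => ?_) (fun s m h1 h2 => ?_)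
  · apply NatTrans.ext; funext X
    cases X
    · ext e; cases e <;> rfl
    · ext v; rfl
  · have hV : ∀ v, s.inl.app .V v = s.inr.app .V v := fun v =>
      types_congr_hom (congr_fun (congrArg NatTrans.app s.condition) SRGrObj.V) v
    have hE : ∀ v, s.inl.app .E (some v) = s.inr.app .E (some v) := fun v =>
      types_congr_hom (congr_fun (congrArg NatTrans.app s.condition) SRGrObj.E) v
    apply NatTrans.ext; funext X
    cases X
    · ext e
      cases e with
      | none => rfl
      | some v => exact hE v
    · ext v; exact hV v
  · apply NatTrans.ext; funext X
    have h1' := congrArg NatTrans.app h1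
    have h2' := congrArg NatTrans.app h2
    cases X
    · ext e
      match e with
      | .inl v => exact types_congr_hom (congr_fun h1' SRGrObj.E) (some v)
      | .inr false => exact types_congr_hom (congr_fun h1' SRGrObj.E) none
      | .inr true => exact types_congr_hom (congr_fun h2' SRGrObj.E) none
    · ext v
      exact types_congr_hom (congr_fun h1' SRGrObj.V) v

/-- Cocone leg sending the (smoothed) extra edge to the first parallel edge of `Pgr`. -/
def uHom : smoothObj edgeRGrph ⟶ Pgr :=
  homToMk (smoothObj edgeRGrph) id
    (Quot.lift (fun e => match e with | some v => Sum.inl v | none => Sum.inr false)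
      (by
        rintro e e' ⟨hs, ht⟩
        change e.getD false = e'.getD false at hs
        change e.getD true = e'.getD true at ht
        cases e <;> cases e' <;> simp_all))
    (fun e => by induction e using Quot.ind with | _ e => cases e <;> rfl)
    (fun e => by induction e using Quot.ind with | _ e => cases e <;> rfl)
    (fun v => rfl)

/-- Cocone leg sending the (smoothed) extra edge to the second parallel edge of `Pgr`. -/
def vHom : smoothObj edgeRGrph ⟶ Pgr :=
  homToMk (smoothObj edgeRGrph) id
    (Quot.lift (fun e => match e with | some v => Sum.inl v | none => Sum.inr true)
      (by
        rintro e e' ⟨hs, ht⟩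
        change e.getD false = e'.getD false at hs
        change e.getD true = e'.getD true at ht
        cases e <;> cases e' <;> simp_all))
    (fun e => by induction e using Quot.ind with | _ e => cases e <;> rfl)
    (fun e => by induction e using Quot.ind with | _ e => cases e <;> rfl)
    (fun v => rfl)

lemma cocone_comm : smooth.map fAB ≫ uHom = smooth.map fAB ≫ vHom := by
  apply NatTrans.ext; funext X
  cases X
  · ext e
    induction e using Quot.ind with | _ e => rfl
  · rfl

end Stmt17Aux

open Stmt17Aux

theorem stmt17 :
    ¬ (∀ ⦃A B D P : RGrph⦄ (f : A ⟶ B) (g : A ⟶ D) (h : B ⟶ P) (k : D ⟶ P),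
        Mono f → Mono g → IsPushout f g h k →
        IsPushout (smooth.map f) (smooth.map g) (smooth.map h) (smooth.map k)) := by
  intro H
  have hp := H fAB fAB hBP kBP monoF monoF isPushoutSquare
  have h1 := hp.inl_desc uHom vHom cocone_comm
  have h2 := hp.inr_desc uHom vHom cocone_comm
  have e1 := types_congr_hom (congr_fun (congrArg NatTrans.app h1) SRGrObj.E)
    (Quot.mk _ (none : Option Bool))
  have e2 := types_congr_hom (congr_fun (congrArg NatTrans.app h2) SRGrObj.E)
    (Quot.mk _ (none : Option Bool))
  have hq : (Quot.mk (parRel Pgr) (Sum.inr false) : (smoothObj Pgr).obj .E) =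
      Quot.mk (parRel Pgr) (Sum.inr true) :=
    Quot.sound ⟨rfl, rfl⟩
  have e1' : (hp.desc uHom vHom cocone_comm).app SRGrObj.E
      (Quot.mk (parRel Pgr) (Sum.inr false)) = Sum.inr false := e1
  have e2' : (hp.desc uHom vHom cocone_comm).app SRGrObj.E
      (Quot.mk (parRel Pgr) (Sum.inr true)) = Sum.inr true := e2
  rw [hq, e2'] at e1'
  exact absurd (Sum.inr.inj e1') (by simp)
end
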